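/- Let g, h be transcendental entire functions and f : ℂ → ℂ a continuous open map with f ∘ g = h ∘ f. If there exist a nonconstant polynomial P and an entire function K such that P ∘ g = K ∘ f on ℂ, and V is a Baker domain of g (a periodic Fatou component on which the iterates of g tend to infinity), then f(V) is contained in the Fatou set of h. -/

import Mathlib

open Filter Topology Set Metric Bornology

noncomputable section

/-- The family `F n` tends to `∞` locally uniformly on `U`. -/
def TendstoUniformlyInftyOn (F : ℕ → ℂ → ℂ) (U : Set ℂ) : Prop :=
  ∀ K : Set ℂ, K ⊆ U → IsCompact K → ∀ M : ℝ, ∀ᶠ n in atTop, ∀ z ∈ K, M < ‖F n z‖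

/-- Normality of a sequence of functions on an open set: every subsequence has a further
subsequence converging locally uniformly to a finite limit or diverging locally uniformly to ∞. -/
def IsNormalOn (F : ℕ → ℂ → ℂ) (U : Set ℂ) : Prop :=
  ∀ s : ℕ → ℕ, StrictMono s →
    ∃ t : ℕ → ℕ, StrictMono t ∧
      ((∃ G : ℂ → ℂ, TendstoLocallyUniformlyOn (fun n => F (s (t n))) G atTop U) ∨
        TendstoUniformlyInftyOn (fun n => F (s (t n))) U)

/-- Fatou set: points with a neighborhood on which the iterates form a normal family. -/
def FatouSet (f : ℂ → ℂ) : Set ℂ :=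
  {z | ∃ U : Set ℂ, IsOpen U ∧ z ∈ U ∧ IsNormalOn (fun n => f^[n]) U}

/-- Julia set: complement of the Fatou set. -/
def JuliaSet (f : ℂ → ℂ) : Set ℂ := (FatouSet f)ᶜ

/-- Transcendental entire function: entire and not a polynomial. -/
def TranscendentalEntire (f : ℂ → ℂ) : Prop :=
  Differentiable ℂ f ∧ ¬∃ p : Polynomial ℂ, ∀ z, f z = p.eval z

/-- Fatou exceptional value: a point with finite backward orbit. -/
def FatouExceptional (f : ℂ → ℂ) (w : ℂ) : Prop :=
  {z : ℂ | ∃ n : ℕ, f^[n] z = w}.Finite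

/-- `w` is an asymptotic value of `f`. -/
def AsymptoticValue (f : ℂ → ℂ) (w : ℂ) : Prop :=
  ∃ Γ : ℝ → ℂ, Continuous Γ ∧ Tendsto (fun t => ‖Γ t‖) atTop atTop ∧
    Tendsto (fun t => f (Γ t)) atTop (𝓝 w)

/-- The set of asymptotic values of `f`. -/
def AV (f : ℂ → ℂ) : Set ℂ := {w | AsymptoticValue f w}

/-- Maximum modulus of `f` on the closed ball of radius `r`. -/
def maxMod (f : ℂ → ℂ) (r : ℝ) : ℝ :=
  sSup ((fun z => ‖f z‖) '' Metric.closedBall (0 : ℂ) r)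

/-- The order of an entire function, as an extended real number. -/
def entireOrder (f : ℂ → ℂ) : EReal :=
  limsup (fun r : ℝ => ((Real.log (Real.log (maxMod f r)) / Real.log r : ℝ) : EReal)) atTop

/-- `V` is a connected component of the Fatou set of `f`. -/
def IsFatouComponent (f : ℂ → ℂ) (V : Set ℂ) : Prop :=
  ∃ z ∈ FatouSet f, V = connectedComponentIn (FatouSet f) z
/-- Baker domain: an invariant Fatou component on which the iterates tend to ∞
locally uniformly. -/
def IsBakerDomain (g : ℂ → ℂ) (V : Set ℂ) : Prop :=
  IsFatouComponent g V ∧ (∀ z ∈ V, g z ∈ V) ∧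
    TendstoUniformlyInftyOn (fun n => g^[n]) V

/-!
The semiconjugacy gives `K ∘ h^[n] ∘ f = P ∘ g^[n+1]`. On a Baker domain `V` the right-hand side
tends to `∞` locally uniformly, since `g^[n+1]` does and `P` is a nonconstant polynomial. As `K` is
bounded on bounded sets, `h^[n] ∘ f` then tends to `∞` locally uniformly on `V`, and because `f` is
open every compact subset of `f '' V` is covered by the image of a compact subset of `V`. So the
iterates of `h` tend to `∞` locally uniformly on the open set `f '' V`, which is therefore Fatou.
-/

namespace TendstoUniformlyInftyOn

variable {F : ℕ → ℂ → ℂ} {U : Set ℂ}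

theorem comp_tendsto (hF : TendstoUniformlyInftyOn F U) {s : ℕ → ℕ}
    (hs : Tendsto s atTop atTop) : TendstoUniformlyInftyOn (fun n => F (s n)) U :=
  fun L hL hLc M => hs.eventually (hF L hL hLc M)

theorem isNormalOn (hF : TendstoUniformlyInftyOn F U) : IsNormalOn F U :=
  fun _ hs => ⟨id, strictMono_id, Or.inr (hF.comp_tendsto hs.tendsto_atTop)⟩

theorem polynomial_eval (hF : TendstoUniformlyInftyOn F U) {P : Polynomial ℂ}
    (hP : 0 < P.degree) : TendstoUniformlyInftyOn (fun n z => P.eval (F n z)) U := by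
  intro L hL hLc M
  have hPbig : ∀ᶠ w : ℂ in cobounded ℂ, M < ‖P.eval w‖ :=
    (P.tendsto_norm_atTop hP tendsto_norm_cobounded_atTop).eventually (eventually_gt_atTop M)
  obtain ⟨R, -, hR⟩ := hasBasis_cobounded_norm.eventually_iff.mp hPbig
  filter_upwards [hF L hL hLc R] with n hn z hz
  exact hR (hn z hz).le

theorem of_comp_continuous {K : ℂ → ℂ} (hK : Continuous K)
    (hKF : TendstoUniformlyInftyOn (fun n z => K (F n z)) U) : TendstoUniformlyInftyOn F U := by
  intro L hL hLc M
  obtain ⟨C, hC⟩ := (isCompact_closedBall (0 : ℂ) M).exists_bound_of_continuousOn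
    hK.continuousOn
  filter_upwards [hKF L hL hLc C] with n hn z hz
  by_contra! hsmall
  exact (hn z hz).not_ge (hC _ (mem_closedBall_zero_iff.mpr hsmall))

end TendstoUniformlyInftyOn

theorem IsOpenMap.exists_isCompact_image_superset {X Y : Type*} [TopologicalSpace X]
    [LocallyCompactSpace X] [TopologicalSpace Y] {f : X → Y} (hf : IsOpenMap f) {V : Set X}
    (hV : IsOpen V) {L : Set Y} (hLV : L ⊆ f '' V) (hL : IsCompact L) :
    ∃ L' : Set X, IsCompact L' ∧ L' ⊆ V ∧ L ⊆ f '' L' := by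
  have hnbhd : ∀ w : L, ∃ C : Set X, IsCompact C ∧ C ⊆ V ∧ (w : Y) ∈ f '' interior C := by
    rintro ⟨w, hw⟩
    obtain ⟨z, hzV, rfl⟩ := hLV hw
    obtain ⟨C, hC, hzC, hCV⟩ := exists_compact_subset hV hzV
    exact ⟨C, hC, hCV, z, hzC, rfl⟩
  choose C hC hCV hwC using hnbhd
  obtain ⟨s, hs⟩ := hL.elim_finite_subcover (fun w => f '' interior (C w))
    (fun w => hf _ isOpen_interior) (fun w hw => mem_iUnion.mpr ⟨⟨w, hw⟩, hwC _⟩)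
  refine ⟨⋃ w ∈ s, C w, s.isCompact_biUnion fun w _ => hC w, iUnion₂_subset fun w _ => hCV w, ?_⟩
  intro y hy
  obtain ⟨w, hws, z, hz, rfl⟩ := mem_iUnion₂.mp (hs hy)
  exact ⟨z, mem_biUnion hws (interior_subset hz), rfl⟩

theorem TendstoUniformlyInftyOn.of_comp_isOpenMap {F : ℕ → ℂ → ℂ} {f : ℂ → ℂ}
    (hf : IsOpenMap f) {V : Set ℂ} (hV : IsOpen V)
    (hFf : TendstoUniformlyInftyOn (fun n z => F n (f z)) V) :
    TendstoUniformlyInftyOn F (f '' V) := by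
  intro L hLV hL M
  obtain ⟨L', hL', hL'V, hLL'⟩ := hf.exists_isCompact_image_superset hV hLV hL
  filter_upwards [hFf L' hL'V hL' M] with n hn w hw
  obtain ⟨z, hz, rfl⟩ := hLL' hw
  exact hn z hz

theorem isOpen_fatouSet (h : ℂ → ℂ) : IsOpen (FatouSet h) :=
  isOpen_iff_forall_mem_open.mpr fun _ ⟨U, hU, hzU, hN⟩ =>
    ⟨U, fun _ hu => ⟨U, hU, hu, hN⟩, hU, hzU⟩

theorem IsFatouComponent.isOpen {g : ℂ → ℂ} {V : Set ℂ} (hV : IsFatouComponent g V) :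
    IsOpen V := by
  obtain ⟨z, -, rfl⟩ := hV
  exact (isOpen_fatouSet g).connectedComponentIn

theorem subset_fatouSet_of_tendstoUniformlyInftyOn {h : ℂ → ℂ} {U : Set ℂ} (hU : IsOpen U)
    (hesc : TendstoUniformlyInftyOn (fun n => h^[n]) U) : U ⊆ FatouSet h :=
  fun _ hz => ⟨U, hU, hz, hesc.isNormalOn⟩

theorem stmt_2_general (g h : ℂ → ℂ)
    (f : ℂ → ℂ) (hfo : IsOpenMap f) (hsemi : f ∘ g = h ∘ f)
    (P : Polynomial ℂ) (hP : 0 < P.degree) (K : ℂ → ℂ) (hK : Differentiable ℂ K)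
    (hPK : ∀ z : ℂ, P.eval (g z) = K (f z))
    (V : Set ℂ) (hV : IsBakerDomain g V) :
    f '' V ⊆ FatouSet h := by
  obtain ⟨hcomp, -, hesc⟩ := hV
  have hiter (n : ℕ) (z : ℂ) : f (g^[n] z) = h^[n] (f z) :=
    Function.Semiconj.iterate_right (fun x => congrFun hsemi x) n z
  have hPg : TendstoUniformlyInftyOn (fun n z => P.eval (g^[n + 1] z)) V :=
    (hesc.comp_tendsto (tendsto_add_atTop_nat 1)).polynomial_eval hP
  have hKhf : TendstoUniformlyInftyOn (fun n z => K (h^[n] (f z))) V := by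
    simpa only [Function.iterate_succ_apply', hPK, hiter] using hPg
  have hhfV : TendstoUniformlyInftyOn (fun n => h^[n]) (f '' V) :=
    (hKhf.of_comp_isOpenMap (F := fun n w => K (h^[n] w)) hfo hcomp.isOpen).of_comp_continuous
      hK.continuous
  exact subset_fatouSet_of_tendstoUniformlyInftyOn (hfo V hcomp.isOpen) hhfV

theorem stmt_2 (g h : ℂ → ℂ) (hg : TranscendentalEntire g) (hh : TranscendentalEntire h)
    (f : ℂ → ℂ) (hfc : Continuous f) (hfo : IsOpenMap f) (hsemi : f ∘ g = h ∘ f)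
    (P : Polynomial ℂ) (hP : 0 < P.degree) (K : ℂ → ℂ) (hK : Differentiable ℂ K)
    (hPK : ∀ z : ℂ, P.eval (g z) = K (f z))
    (V : Set ℂ) (hV : IsBakerDomain g V) :
    f '' V ⊆ FatouSet h :=
  stmt_2_general g h f hfo hsemi P hP K hK hPK V hV
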